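/- For every MEC instance and every discretization constant φ > 1, let RDP^φ be the linear program obtained from RDP by replacing the capacity right-hand sides (1−α)·b_j and (1−α)·c_k with φ·b_j and φ·c_k, respectively. Then OPT_DTRP ≤ OPT_{RDP^φ}. (Hence the optimal value of RDP^φ is a valid upper bound on the optimal saved energy of DTRP.) -/

import Mathlib

open scoped BigOperators

/-- An MEC instance: finite sets of tasks `I`, access points `J` and servers `K`; task
parameters (size `s`, per-bit demand `eta`, deadline `dl`, local energy `El`, accessible
APs `acc`); channel gains `G`, noise power `sigma2`, resource units `bu, cu, pu`; integer
capacities `bcap, ccap ≥ 1`; backhaul delays `delay ≥ 0`; maximum offloading power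
`pmax ≥ 1`; and a resource allocation bound `0 ≤ alpha < 1` with `⌊alpha * bcap j⌋ ≥ 1` and
`⌊alpha * ccap k⌋ ≥ 1`. -/
structure MECInstance where
  I : Type
  J : Type
  K : Type
  [fI : Fintype I]
  [fJ : Fintype J]
  [fK : Fintype K]
  s : I → ℝ
  eta : I → ℝ
  dl : I → ℝ
  El : I → ℝ
  acc : I → J → Prop
  G : I → J → ℝ
  sigma2 : ℝ
  bu : ℝ
  cu : ℝ
  pu : ℝ
  bcap : J → ℤ
  ccap : K → ℤ
  delay : J → K → ℝ
  pmax : ℤ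
  alpha : ℝ
  hs : ∀ i, 0 < s i
  heta : ∀ i, 0 < eta i
  hdl : ∀ i, 0 < dl i
  hEl : ∀ i, 0 < El i
  hG : ∀ i j, 0 < G i j
  hsigma2 : 0 < sigma2
  hbu : 0 < bu
  hcu : 0 < cu
  hpu : 0 < pu
  hbcap : ∀ j, 1 ≤ bcap j
  hccap : ∀ k, 1 ≤ ccap k
  hdelay : ∀ j k, 0 ≤ delay j k
  hpmax : 1 ≤ pmax
  halpha0 : 0 ≤ alpha
  halpha1 : alpha < 1
  halphab : ∀ j, 1 ≤ ⌊alpha * (bcap j : ℝ)⌋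
  halphac : ∀ k, 1 ≤ ⌊alpha * (ccap k : ℝ)⌋

attribute [instance] MECInstance.fI MECInstance.fJ MECInstance.fK

namespace MECInstance

variable (P : MECInstance)

/-- Offloading time `t^o_{ij} = s_i / (b_{ij}·b̄·log₂(1 + p_{ij}·p̄·G_{ij}/σ²))`. -/
noncomputable def toff (i : P.I) (j : P.J) (b p : ℤ) : ℝ :=
  P.s i / ((b : ℝ) * P.bu * Real.logb 2 (1 + (p : ℝ) * P.pu * P.G i j / P.sigma2))

/-- Saved energy `E_{ij} = E^l_i − p_{ij}·p̄·t^o_{ij}`. -/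
noncomputable def Esaved (i : P.I) (j : P.J) (b p : ℤ) : ℝ :=
  P.El i - (p : ℝ) * P.pu * P.toff i j b p

/-- Feasibility of a DTRP solution `(x, y, b, c, p)`. -/
def DTRPFeasible (x : P.I → P.J → ℤ) (y : P.I → P.K → ℤ)
    (b : P.I → P.J → ℤ) (c : P.I → P.K → ℤ) (p : P.I → P.J → ℤ) : Prop :=
  (∀ i j, x i j = 0 ∨ x i j = 1) ∧
  (∀ i k, y i k = 0 ∨ y i k = 1) ∧
  (∀ i j, ¬ P.acc i j → x i j = 0) ∧
  (∀ i, ∑ j, x i j ≤ 1) ∧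
  (∀ i, ∑ k, y i k ≤ 1) ∧
  (∀ i j, 0 ≤ b i j) ∧ (∀ i k, 0 ≤ c i k) ∧ (∀ i j, 0 ≤ p i j) ∧
  (∀ j, ∑ i, b i j ≤ P.bcap j) ∧
  (∀ k, ∑ i, c i k ≤ P.ccap k) ∧
  (∀ i j, (b i j : ℝ) ≤ P.alpha * (P.bcap j : ℝ)) ∧
  (∀ i k, (c i k : ℝ) ≤ P.alpha * (P.ccap k : ℝ)) ∧
  (∀ i j, p i j ≤ P.pmax) ∧
  (∀ i j, x i j = 1 → 1 ≤ b i j) ∧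
  (∀ i j, x i j = 1 → 1 ≤ p i j) ∧
  (∀ i k, y i k = 1 → 1 ≤ c i k) ∧
  (∀ i, (∑ j, (x i j : ℝ) * P.toff i j (b i j) (p i j))
      + (∑ j, ∑ k, (x i j : ℝ) * (y i k : ℝ) * P.delay j k)
      + (∑ k, (y i k : ℝ) * (P.s i * P.eta i / ((c i k : ℝ) * P.cu))) ≤ P.dl i)

/-- DTRP objective: total saved energy `Σ_{i,j,k} x_{ij}·y_{ik}·E_{ij}`. -/
noncomputable def DTRPObj (x : P.I → P.J → ℤ) (y : P.I → P.K → ℤ)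
    (b : P.I → P.J → ℤ) (p : P.I → P.J → ℤ) : ℝ :=
  ∑ i, ∑ j, ∑ k, (x i j : ℝ) * (y i k : ℝ) * P.Esaved i j (b i j) (p i j)

/-- Optimal value of DTRP (supremum of objectives of feasible solutions). -/
noncomputable def optDTRP : ℝ :=
  sSup { v : ℝ | ∃ x y b c p, P.DTRPFeasible x y b c p ∧ v = P.DTRPObj x y b p }

/-- `π_j = ⌈log_φ(α·b_j)⌉` (a nonnegative integer). -/
noncomputable def piJ (φ : ℝ) (j : P.J) : ℕ :=
  (⌈Real.logb φ (P.alpha * (P.bcap j : ℝ))⌉).toNat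

/-- `λ_k = ⌈log_φ(α·c_k)⌉` (a nonnegative integer). -/
noncomputable def lamK (φ : ℝ) (k : P.K) : ℕ :=
  (⌈Real.logb φ (P.alpha * (P.ccap k : ℝ))⌉).toNat

/-- Discretized bandwidth levels: `B_m = ⌊φ^m⌋` for `m < π_j`, `B_{π_j} = ⌊α·b_j⌋`. -/
noncomputable def Blev (φ : ℝ) (j : P.J) (m : ℕ) : ℤ :=
  if m < P.piJ φ j then ⌊φ ^ m⌋ else ⌊P.alpha * (P.bcap j : ℝ)⌋

/-- Discretized computation levels: `C_n = ⌊φ^n⌋` for `n < λ_k`, `C_{λ_k} = ⌊α·c_k⌋`. -/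
noncomputable def Clev (φ : ℝ) (k : P.K) (n : ℕ) : ℤ :=
  if n < P.lamK φ k then ⌊φ ^ n⌋ else ⌊P.alpha * (P.ccap k : ℝ)⌋

/-- Allowed offloading time `T_{ijmkn} = d_i − δ_{jk} − s_i·η_i/(C_n·c̄)`. -/
noncomputable def Tcomb (φ : ℝ) (i : P.I) (j : P.J) (k : P.K) (n : ℕ) : ℝ :=
  P.dl i - P.delay j k - P.s i * P.eta i / ((P.Clev φ k n : ℝ) * P.cu)

/-- Required power `P_{ijmkn} = (σ²/(p̄·G_{ij}))·(2^{s_i/(T·B_m·b̄)} − 1)`. -/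
noncomputable def Pcomb (φ : ℝ) (i : P.I) (j : P.J) (m : ℕ) (k : P.K) (n : ℕ) : ℝ :=
  (P.sigma2 / (P.pu * P.G i j)) *
    ((2 : ℝ) ^ (P.s i / (P.Tcomb φ i j k n * (P.Blev φ j m : ℝ) * P.bu)) - 1)

/-- Saved energy `E_{ijmkn} = E^l_i − P_{ijmkn}·p̄·T_{ijmkn}` of a combination. -/
noncomputable def Ecomb (φ : ℝ) (i : P.I) (j : P.J) (m : ℕ) (k : P.K) (n : ℕ) : ℝ :=
  P.El i - P.Pcomb φ i j m k n * P.pu * P.Tcomb φ i j k n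

/-- Feasibility of a combination `⟨i,j,m,k,n⟩`. -/
noncomputable def FeasComb (φ : ℝ) (i : P.I) (j : P.J) (m : ℕ) (k : P.K) (n : ℕ) : Prop :=
  P.acc i j ∧ m ≤ P.piJ φ j ∧ n ≤ P.lamK φ k ∧
  0 < P.Tcomb φ i j k n ∧ P.Pcomb φ i j m k n ≤ (P.pmax : ℝ) ∧ 0 < P.Ecomb φ i j m k n

/-- RDP objective `Σ_{⟨i,j,m,k,n⟩} z_{ijmkn}·E_{ijmkn}`. -/
noncomputable def RDPObj (φ : ℝ) (z : P.I → P.J → ℕ → P.K → ℕ → ℝ) : ℝ :=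
  ∑ i, ∑ j, ∑ m ∈ Finset.range (P.piJ φ j + 1), ∑ k, ∑ n ∈ Finset.range (P.lamK φ k + 1),
    z i j m k n * P.Ecomb φ i j m k n

/-- Feasibility for the LP `RDP^φ`: as RDP, but with the capacity right-hand sides
`(1−α)·b_j` and `(1−α)·c_k` replaced by `φ·b_j` and `φ·c_k`. -/
noncomputable def RDPphiFeasible (φ : ℝ) (z : P.I → P.J → ℕ → P.K → ℕ → ℝ) : Prop :=
  (∀ i j m k n, 0 ≤ z i j m k n) ∧
  (∀ i j m k n, ¬ P.FeasComb φ i j m k n → z i j m k n = 0) ∧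
  (∀ i, ∑ j, ∑ m ∈ Finset.range (P.piJ φ j + 1), ∑ k, ∑ n ∈ Finset.range (P.lamK φ k + 1),
      z i j m k n ≤ 1) ∧
  (∀ j, ∑ i, ∑ m ∈ Finset.range (P.piJ φ j + 1), ∑ k, ∑ n ∈ Finset.range (P.lamK φ k + 1),
      z i j m k n * (P.Blev φ j m : ℝ) ≤ φ * (P.bcap j : ℝ)) ∧
  (∀ k, ∑ i, ∑ j, ∑ m ∈ Finset.range (P.piJ φ j + 1), ∑ n ∈ Finset.range (P.lamK φ k + 1),
      z i j m k n * (P.Clev φ k n : ℝ) ≤ φ * (P.ccap k : ℝ))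

/-- Optimal value of `RDP^φ`. -/
noncomputable def optRDPphi (φ : ℝ) : ℝ :=
  sSup { v : ℝ | ∃ z, P.RDPphiFeasible φ z ∧ v = P.RDPObj φ z }

end MECInstance

/-!
Round the bandwidth `b_ij` and the computation `c_ik` of every offloaded task up to the levels
`B_m ≥ b_ij` and `C_n ≥ c_ik` with `m = min ⌈log_φ b_ij⌉ π_j` and `n = min ⌈log_φ c_ik⌉ λ_k`.
As `φ ^ ⌈log_φ v⌉ < φ v`, the rounded amounts exceed the used ones by at most a factor `φ`, so
the capacity constraints of `RDP^φ` hold. More computation leaves at least as much offloading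
time (`T ≥ t^o`), and more bandwidth and time need less power (`P ≤ p`); since
`t ↦ t (2 ^ (a / t) - 1)` is decreasing, the transmission energy `P T` is at most `p t^o` too.
Hence the 0/1 point of `RDP^φ` selecting the rounded combinations is feasible and saves at least
as much energy as the DTRP solution. Every objective value of `RDP^φ` is at most `Σ E^l_i`, so
the supremum dominates.
-/

open Finset Real

lemma le_pow_ceil_logb_toNat {φ u : ℝ} (hφ : 1 < φ) (hu : 0 < u) :
    u ≤ φ ^ ⌈logb φ u⌉.toNat := by
  rw [← rpow_natCast, ← logb_le_iff_le_rpow hφ hu]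
  exact (Int.le_ceil _).trans (by exact_mod_cast Int.self_le_toNat _)

lemma pow_ceil_logb_toNat_lt {φ u : ℝ} (hφ : 1 < φ) (hu : 1 ≤ u) :
    φ ^ ⌈logb φ u⌉.toNat < φ * u := by
  have hlog : 0 ≤ logb φ u := logb_nonneg hφ hu
  have hcast : ((⌈logb φ u⌉.toNat : ℕ) : ℝ) = ⌈logb φ u⌉ := by
    exact_mod_cast Int.toNat_of_nonneg (Int.ceil_nonneg hlog)
  calc φ ^ ⌈logb φ u⌉.toNat = φ ^ (⌈logb φ u⌉ : ℝ) := by rw [← hcast, rpow_natCast]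
    _ < φ ^ (logb φ u + 1) := rpow_lt_rpow_of_exponent_lt hφ (Int.ceil_lt_add_one _)
    _ = φ * u := by
      rw [rpow_add (by linarith), rpow_logb (by linarith) hφ.ne' (by linarith), rpow_one, mul_comm]

noncomputable def geomLevelCount (φ W : ℝ) : ℕ := ⌈logb φ W⌉.toNat

noncomputable def geomLevel (φ W : ℝ) (m : ℕ) : ℤ :=
  if m < geomLevelCount φ W then ⌊φ ^ m⌋ else ⌊W⌋

noncomputable def geomLevelIndex (φ W v : ℝ) : ℕ :=
  min ⌈logb φ v⌉.toNat (geomLevelCount φ W)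

lemma geomLevelIndex_le (φ W v : ℝ) : geomLevelIndex φ W v ≤ geomLevelCount φ W :=
  min_le_right _ _

lemma geomLevel_geomLevelIndex_bounds {φ W : ℝ} (hφ : 1 < φ) {v : ℤ} (hv : 1 ≤ v)
    (hvW : (v : ℝ) ≤ W) :
    v ≤ geomLevel φ W (geomLevelIndex φ W v) ∧
      (geomLevel φ W (geomLevelIndex φ W v) : ℝ) ≤ φ * v := by
  have hv' : (1 : ℝ) ≤ v := by exact_mod_cast hv
  have hupper := pow_ceil_logb_toNat_lt hφ hv'
  unfold geomLevel geomLevelIndex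
  by_cases hlt : ⌈logb φ v⌉.toNat < geomLevelCount φ W
  · rw [min_eq_left hlt.le, if_pos hlt]
    exact ⟨Int.le_floor.mpr (le_pow_ceil_logb_toNat hφ (by linarith)),
      (Int.floor_le _).trans hupper.le⟩
  · rw [min_eq_right (not_lt.mp hlt), if_neg (lt_irrefl _)]
    refine ⟨Int.le_floor.mpr hvW, ?_⟩
    calc (⌊W⌋ : ℝ) ≤ W := Int.floor_le W
      _ ≤ φ ^ geomLevelCount φ W := le_pow_ceil_logb_toNat hφ (by linarith)
      _ ≤ φ ^ ⌈logb φ v⌉.toNat := pow_le_pow_right₀ hφ.le (not_lt.mp hlt)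
      _ ≤ φ * v := hupper.le

lemma one_le_geomLevel {φ W : ℝ} (hφ : 1 ≤ φ) (hW : 1 ≤ ⌊W⌋) (m : ℕ) : 1 ≤ geomLevel φ W m := by
  unfold geomLevel
  split
  · exact Int.le_floor.mpr (by simpa using one_le_pow₀ hφ)
  · exact hW

/-- Bernoulli's inequality for the exponent `t₁ / t₂ ≤ 1`. -/
lemma mul_rpow_div_sub_one_le {a c t₁ t₂ : ℝ} (ha : 0 ≤ a) (ht₁ : 0 < t₁) (ht : t₁ ≤ t₂) :
    t₂ * (a ^ (c / t₂) - 1) ≤ t₁ * (a ^ (c / t₁) - 1) := by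
  have ht₂ : 0 < t₂ := ht₁.trans_le ht
  have hpow : a ^ (c / t₂) = (1 + (a ^ (c / t₁) - 1)) ^ (t₁ / t₂) := by
    rw [add_sub_cancel, ← rpow_mul ha]
    field_simp
  have hbern := rpow_one_add_le_one_add_mul_self (s := a ^ (c / t₁) - 1)
    (by linarith [rpow_nonneg ha (c / t₁)]) (div_nonneg ht₁.le ht₂.le)
    ((div_le_one ht₂).mpr ht)
  calc t₂ * (a ^ (c / t₂) - 1) ≤ t₂ * (t₁ / t₂ * (a ^ (c / t₁) - 1)) := by
        rw [hpow]; gcongr; linarith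
    _ = t₁ * (a ^ (c / t₁) - 1) := by field_simp

lemma sum_intCast_mul_eq_of_eq_one {ι R : Type*} [Fintype ι] [CommRing R] {x : ι → ℤ}
    (h01 : ∀ j, x j = 0 ∨ x j = 1) (hsum : ∑ j, x j ≤ 1) {j₀ : ι} (hj₀ : x j₀ = 1)
    (f : ι → R) : ∑ j, (x j : R) * f j = f j₀ := by
  have hzero : ∀ j ≠ j₀, x j = 0 := fun j hj => (h01 j).resolve_right fun hj1 => by
    have := add_le_sum (f := x) (fun i _ => by rcases h01 i with h | h <;> simp [h])
      (mem_univ j) (mem_univ j₀) hj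
    omega
  rw [sum_eq_single j₀ (fun j _ hj => by simp [hzero j hj]) (by simp), hj₀]
  simp

lemma sum_range_sum_range_ite_mul {R : Type*} [CommSemiring R] {M N m₀ n₀ : ℕ}
    (hm : m₀ ≤ M) (hn : n₀ ≤ N) (a : R) (w : ℕ → ℕ → R) :
    ∑ m ∈ range (M + 1), ∑ n ∈ range (N + 1), (if m = m₀ ∧ n = n₀ then a else 0) * w m n =
      a * w m₀ n₀ := by
  simp [ite_and, ite_mul, sum_ite_eq', hm, hn]

namespace MECInstance

variable {P : MECInstance} {φ : ℝ} {i : P.I} {j : P.J} {k : P.K} {m n : ℕ}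

lemma Blev_eq_geomLevel (P : MECInstance) (φ : ℝ) (j : P.J) :
    P.Blev φ j = geomLevel φ (P.alpha * P.bcap j) := rfl

lemma Clev_eq_geomLevel (P : MECInstance) (φ : ℝ) (k : P.K) :
    P.Clev φ k = geomLevel φ (P.alpha * P.ccap k) := rfl

/-- The Shannon rate formula solved for the power: transmitting the input of task `i` to AP `j`
over `B` bandwidth units within time `t`. -/
noncomputable def requiredPower (P : MECInstance) (i : P.I) (j : P.J) (t B : ℝ) : ℝ :=
  P.sigma2 / (P.pu * P.G i j) * ((2 : ℝ) ^ (P.s i / (t * B * P.bu)) - 1)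

lemma Pcomb_eq_requiredPower :
    P.Pcomb φ i j m k n = P.requiredPower i j (P.Tcomb φ i j k n) (P.Blev φ j m) := rfl

lemma toff_pos {b p : ℤ} (hb : 0 < b) (hp : 0 < p) : 0 < P.toff i j b p := by
  have := P.hs i; have := P.hbu; have := P.hpu; have := P.hG i j; have := P.hsigma2
  have hb' : (0 : ℝ) < b := by exact_mod_cast hb
  have hp' : (0 : ℝ) < p := by exact_mod_cast hp
  have hL : 0 < logb 2 (1 + p * P.pu * P.G i j / P.sigma2) :=
    logb_pos one_lt_two (by linarith [show 0 < p * P.pu * P.G i j / P.sigma2 by positivity])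
  unfold toff
  positivity

lemma requiredPower_toff {b p : ℤ} (hb : 0 < b) (hp : 0 < p) :
    P.requiredPower i j (P.toff i j b p) b = p := by
  have := P.hs i; have := P.hbu; have := P.hpu; have := P.hG i j; have := P.hsigma2
  have hb' : (0 : ℝ) < b := by exact_mod_cast hb
  have hp' : (0 : ℝ) < p := by exact_mod_cast hp
  set L := logb 2 (1 + p * P.pu * P.G i j / P.sigma2)
  have hL : 0 < L :=
    logb_pos one_lt_two (by linarith [show 0 < p * P.pu * P.G i j / P.sigma2 by positivity])
  have hexp : P.s i / (P.toff i j b p * b * P.bu) = L := by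
    rw [show P.toff i j b p = P.s i / (b * P.bu * L) from rfl]
    field_simp
  have h2L : (2 : ℝ) ^ L = 1 + p * P.pu * P.G i j / P.sigma2 :=
    rpow_logb two_pos (by norm_num) (by positivity)
  rw [requiredPower, hexp, h2L]
  field_simp
  ring

lemma requiredPower_le {t₁ t₂ B₁ B₂ : ℝ} (ht₁ : 0 < t₁) (ht : t₁ ≤ t₂) (hB₁ : 0 < B₁)
    (hB : B₁ ≤ B₂) : P.requiredPower i j t₂ B₂ ≤ P.requiredPower i j t₁ B₁ := by
  have := P.hs i; have := P.hbu; have := P.hpu; have := P.hG i j; have := P.hsigma2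
  have hden : t₁ * B₁ * P.bu ≤ t₂ * B₂ * P.bu := by gcongr; linarith
  unfold requiredPower
  gcongr
  exact one_le_two

lemma mul_requiredPower_le {t₁ t₂ B₁ B₂ : ℝ} (ht₁ : 0 < t₁) (ht : t₁ ≤ t₂) (hB₁ : 0 < B₁)
    (hB : B₁ ≤ B₂) : t₂ * P.requiredPower i j t₂ B₂ ≤ t₁ * P.requiredPower i j t₁ B₁ := by
  have := P.hsigma2; have := P.hpu; have := P.hG i j
  have hexp : ∀ t, P.s i / (t * B₁ * P.bu) = P.s i / (B₁ * P.bu) / t := fun t => by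
    rw [div_div]; ring_nf
  calc t₂ * P.requiredPower i j t₂ B₂ ≤ t₂ * P.requiredPower i j t₂ B₁ :=
        mul_le_mul_of_nonneg_left (requiredPower_le (ht₁.trans_le ht) le_rfl hB₁ hB)
          (by linarith)
    _ = P.sigma2 / (P.pu * P.G i j) * (t₂ * ((2 : ℝ) ^ (P.s i / (B₁ * P.bu) / t₂) - 1)) := by
        rw [requiredPower, hexp]; ring
    _ ≤ P.sigma2 / (P.pu * P.G i j) * (t₁ * ((2 : ℝ) ^ (P.s i / (B₁ * P.bu) / t₁) - 1)) :=
        mul_le_mul_of_nonneg_left (mul_rpow_div_sub_one_le zero_le_two ht₁ ht) (by positivity)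
    _ = t₁ * P.requiredPower i j t₁ B₁ := by rw [requiredPower, hexp]; ring

lemma toff_le_Tcomb {b p c : ℤ} (hc : 0 < c) (hC : (c : ℝ) ≤ P.Clev φ k n)
    (hdl : P.toff i j b p + P.delay j k + P.s i * P.eta i / (c * P.cu) ≤ P.dl i) :
    P.toff i j b p ≤ P.Tcomb φ i j k n := by
  have := P.hs i; have := P.heta i; have := P.hcu
  have hc' : (0 : ℝ) < c := by exact_mod_cast hc
  have : P.s i * P.eta i / (P.Clev φ k n * P.cu) ≤ P.s i * P.eta i / (c * P.cu) := by gcongr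
  unfold Tcomb
  linarith

lemma Pcomb_le {b p : ℤ} (hb : 0 < b) (hp : 0 < p) (hB : (b : ℝ) ≤ P.Blev φ j m)
    (hT : P.toff i j b p ≤ P.Tcomb φ i j k n) : P.Pcomb φ i j m k n ≤ p := by
  rw [Pcomb_eq_requiredPower, ← requiredPower_toff hb hp]
  exact requiredPower_le (toff_pos hb hp) hT (by exact_mod_cast hb) hB

lemma Esaved_le_Ecomb {b p : ℤ} (hb : 0 < b) (hp : 0 < p) (hB : (b : ℝ) ≤ P.Blev φ j m)
    (hT : P.toff i j b p ≤ P.Tcomb φ i j k n) : P.Esaved i j b p ≤ P.Ecomb φ i j m k n := by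
  have h := mul_requiredPower_le (P := P) (i := i) (j := j) (toff_pos hb hp) hT
    (by exact_mod_cast hb) hB
  rw [requiredPower_toff hb hp, ← Pcomb_eq_requiredPower] at h
  unfold Esaved Ecomb
  nlinarith [P.hpu]

lemma Pcomb_nonneg (hφ : 1 ≤ φ) (hT : 0 < P.Tcomb φ i j k n) : 0 ≤ P.Pcomb φ i j m k n := by
  have := P.hs i; have := P.hbu; have := P.hpu; have := P.hG i j; have := P.hsigma2
  have hB : (1 : ℝ) ≤ P.Blev φ j m := by
    rw [Blev_eq_geomLevel]; exact_mod_cast one_le_geomLevel hφ (P.halphab j) m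
  have h2 : 1 ≤ (2 : ℝ) ^ (P.s i / (P.Tcomb φ i j k n * P.Blev φ j m * P.bu)) :=
    one_le_rpow one_le_two (div_nonneg (P.hs i).le (by positivity))
  unfold Pcomb
  exact mul_nonneg (by positivity) (by linarith)

lemma Ecomb_le_El (hφ : 1 ≤ φ) (hT : 0 < P.Tcomb φ i j k n) : P.Ecomb φ i j m k n ≤ P.El i := by
  have := Pcomb_nonneg (m := m) hφ hT
  have := P.hpu
  unfold Ecomb
  have : 0 ≤ P.Pcomb φ i j m k n * P.pu * P.Tcomb φ i j k n := by positivity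
  linarith

lemma DTRPFeasible.deadline_of_eq_one {x : P.I → P.J → ℤ} {y : P.I → P.K → ℤ}
    {b : P.I → P.J → ℤ} {c : P.I → P.K → ℤ} {p : P.I → P.J → ℤ} (hf : P.DTRPFeasible x y b c p)
    (hx : x i j = 1) (hy : y i k = 1) :
    P.toff i j (b i j) (p i j) + P.delay j k + P.s i * P.eta i / (c i k * P.cu) ≤ P.dl i := by
  obtain ⟨hx01, hy01, -, hxsum, hysum, -, -, -, -, -, -, -, -, -, -, -, hdl⟩ := hf
  have hdelay : ∑ j', ∑ k', (x i j' : ℝ) * y i k' * P.delay j' k' =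
      ∑ j', (x i j' : ℝ) * ∑ k', (y i k' : ℝ) * P.delay j' k' := by
    simp only [mul_sum, mul_assoc]
  have h := hdl i
  rwa [hdelay, sum_intCast_mul_eq_of_eq_one (hx01 i) (hxsum i) hx,
    sum_intCast_mul_eq_of_eq_one (hx01 i) (hxsum i) hx,
    sum_intCast_mul_eq_of_eq_one (hy01 i) (hysum i) hy,
    sum_intCast_mul_eq_of_eq_one (hy01 i) (hysum i) hy] at h

section Rounding

variable {x : P.I → P.J → ℤ} {y : P.I → P.K → ℤ} {b : P.I → P.J → ℤ} {c : P.I → P.K → ℤ}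
  {p : P.I → P.J → ℤ}

variable (P φ) in
noncomputable def bandLevelIdx (b : P.I → P.J → ℤ) (i : P.I) (j : P.J) : ℕ :=
  geomLevelIndex φ (P.alpha * P.bcap j) (b i j)

variable (P φ) in
noncomputable def compLevelIdx (c : P.I → P.K → ℤ) (i : P.I) (k : P.K) : ℕ :=
  geomLevelIndex φ (P.alpha * P.ccap k) (c i k)

variable (P φ x y b c) in
/-- A rounded combination saving no energy is not in `𝓝`, so it is dropped; by
`Esaved_le_Ecomb` the DTRP solution saves no energy there either. -/
noncomputable def roundedWeight (i : P.I) (j : P.J) (k : P.K) : ℝ :=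
  if x i j = 1 ∧ y i k = 1 ∧ 0 < P.Ecomb φ i j (P.bandLevelIdx φ b i j) k (P.compLevelIdx φ c i k)
  then 1 else 0

variable (P φ x y b c) in
noncomputable def roundedZ (i : P.I) (j : P.J) (m : ℕ) (k : P.K) (n : ℕ) : ℝ :=
  if m = P.bandLevelIdx φ b i j ∧ n = P.compLevelIdx φ c i k then
    P.roundedWeight φ x y b c i j k
  else 0

lemma Blev_bandLevelIdx_bounds (hφ : 1 < φ) (hf : P.DTRPFeasible x y b c p)
    (hx : x i j = 1) :
    (b i j : ℝ) ≤ P.Blev φ j (P.bandLevelIdx φ b i j) ∧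
      (P.Blev φ j (P.bandLevelIdx φ b i j) : ℝ) ≤ φ * b i j := by
  obtain ⟨-, -, -, -, -, -, -, -, -, -, hbα, -, -, hb1, -, -, -⟩ := hf
  rw [Blev_eq_geomLevel]
  obtain ⟨hle, hge⟩ := geomLevel_geomLevelIndex_bounds hφ (hb1 i j hx) (hbα i j)
  exact ⟨by exact_mod_cast hle, hge⟩

lemma Clev_compLevelIdx_bounds (hφ : 1 < φ) (hf : P.DTRPFeasible x y b c p)
    (hy : y i k = 1) :
    (c i k : ℝ) ≤ P.Clev φ k (P.compLevelIdx φ c i k) ∧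
      (P.Clev φ k (P.compLevelIdx φ c i k) : ℝ) ≤ φ * c i k := by
  obtain ⟨-, -, -, -, -, -, -, -, -, -, -, hcα, -, -, -, hc1, -⟩ := hf
  rw [Clev_eq_geomLevel]
  obtain ⟨hle, hge⟩ := geomLevel_geomLevelIndex_bounds hφ (hc1 i k hy) (hcα i k)
  exact ⟨by exact_mod_cast hle, hge⟩

lemma rounded_combination_spec (hφ : 1 < φ) (hf : P.DTRPFeasible x y b c p)
    (hx : x i j = 1) (hy : y i k = 1) :
    0 < P.Tcomb φ i j k (P.compLevelIdx φ c i k) ∧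
      P.Pcomb φ i j (P.bandLevelIdx φ b i j) k (P.compLevelIdx φ c i k) ≤ P.pmax ∧
      P.Esaved i j (b i j) (p i j) ≤
        P.Ecomb φ i j (P.bandLevelIdx φ b i j) k (P.compLevelIdx φ c i k) := by
  have ⟨_, _, _, _, _, _, _, _, _, _, _, _, hpmax, hb1, hp1, hc1, _⟩ := hf
  have hb : 0 < b i j := hb1 i j hx
  have hp : 0 < p i j := hp1 i j hx
  have hc : 0 < c i k := hc1 i k hy
  have hT := toff_le_Tcomb hc (Clev_compLevelIdx_bounds hφ hf hy).1 (hf.deadline_of_eq_one hx hy)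
  have hB := (Blev_bandLevelIdx_bounds hφ hf hx).1
  refine ⟨(toff_pos hb hp).trans_le hT, (Pcomb_le hb hp hB hT).trans ?_,
    Esaved_le_Ecomb hb hp hB hT⟩
  exact_mod_cast hpmax i j

lemma roundedWeight_nonneg (i : P.I) (j : P.J) (k : P.K) :
    0 ≤ P.roundedWeight φ x y b c i j k := by
  unfold roundedWeight; split_ifs <;> norm_num

lemma roundedWeight_le_mul (hf : P.DTRPFeasible x y b c p) (i : P.I) (j : P.J) (k : P.K) :
    P.roundedWeight φ x y b c i j k ≤ (x i j : ℝ) * y i k := by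
  obtain ⟨hx01, hy01, -⟩ := hf
  unfold roundedWeight
  split_ifs with h
  · simp [h.1, h.2.1]
  · rcases hx01 i j with hx | hx <;> rcases hy01 i k with hy | hy <;> simp [hx, hy]

lemma roundedWeight_mul_Blev_le (hφ : 1 < φ) (hf : P.DTRPFeasible x y b c p)
    (i : P.I) (j : P.J) (k : P.K) :
    P.roundedWeight φ x y b c i j k * P.Blev φ j (P.bandLevelIdx φ b i j) ≤
      y i k * (φ * b i j) := by
  have ⟨_, hy01, _, _, _, hb0, _⟩ := hf
  unfold roundedWeight
  split_ifs with h
  · rw [one_mul, h.2.1, Int.cast_one, one_mul]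
    exact (Blev_bandLevelIdx_bounds hφ hf h.1).2
  · have : (0 : ℝ) ≤ y i k := by rcases hy01 i k with hy | hy <;> simp [hy]
    have : (0 : ℝ) ≤ b i j := by exact_mod_cast hb0 i j
    rw [zero_mul]; positivity

lemma roundedWeight_mul_Clev_le (hφ : 1 < φ) (hf : P.DTRPFeasible x y b c p)
    (i : P.I) (j : P.J) (k : P.K) :
    P.roundedWeight φ x y b c i j k * P.Clev φ k (P.compLevelIdx φ c i k) ≤
      x i j * (φ * c i k) := by
  have ⟨hx01, _, _, _, _, _, hc0, _⟩ := hf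
  unfold roundedWeight
  split_ifs with h
  · rw [one_mul, h.1, Int.cast_one, one_mul]
    exact (Clev_compLevelIdx_bounds hφ hf h.2.1).2
  · have : (0 : ℝ) ≤ x i j := by rcases hx01 i j with hx | hx <;> simp [hx]
    have : (0 : ℝ) ≤ c i k := by exact_mod_cast hc0 i k
    rw [zero_mul]; positivity

lemma mul_Esaved_le_roundedWeight_mul (hφ : 1 < φ) (hf : P.DTRPFeasible x y b c p)
    (i : P.I) (j : P.J) (k : P.K) :
    (x i j : ℝ) * y i k * P.Esaved i j (b i j) (p i j) ≤
      P.roundedWeight φ x y b c i j k *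
        P.Ecomb φ i j (P.bandLevelIdx φ b i j) k (P.compLevelIdx φ c i k) := by
  have ⟨hx01, hy01, _⟩ := hf
  rcases hx01 i j with hx | hx
  · simp [roundedWeight, hx]
  rcases hy01 i k with hy | hy
  · simp [roundedWeight, hy]
  have hE := (rounded_combination_spec hφ hf hx hy).2.2
  unfold roundedWeight
  split_ifs with h
  · simpa [hx, hy] using hE
  · simp only [hx, hy, true_and, not_lt] at h
    simp only [hx, hy, Int.cast_one, one_mul, zero_mul]
    linarith

lemma sum_roundedZ_mul (i : P.I) (j : P.J) (k : P.K) (w : ℕ → ℕ → ℝ) :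
    ∑ m ∈ range (P.piJ φ j + 1), ∑ n ∈ range (P.lamK φ k + 1),
        P.roundedZ φ x y b c i j m k n * w m n =
      P.roundedWeight φ x y b c i j k * w (P.bandLevelIdx φ b i j) (P.compLevelIdx φ c i k) :=
  sum_range_sum_range_ite_mul (geomLevelIndex_le _ _ _) (geomLevelIndex_le _ _ _) _ w

lemma roundedZ_eq_zero_of_not_feasComb (hφ : 1 < φ) (hf : P.DTRPFeasible x y b c p)
    (hnf : ¬ P.FeasComb φ i j m k n) : P.roundedZ φ x y b c i j m k n = 0 := by
  have ⟨_, _, hx_acc, _⟩ := hf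
  unfold roundedZ roundedWeight
  split_ifs with hmn h
  · obtain ⟨rfl, rfl⟩ := hmn
    obtain ⟨hT, hP, -⟩ := rounded_combination_spec hφ hf h.1 h.2.1
    have hacc : P.acc i j := by_contra fun hna => by simp [hx_acc i j hna] at h
    exact absurd ⟨hacc, geomLevelIndex_le _ _ _, geomLevelIndex_le _ _ _, hT, hP, h.2.2⟩ hnf
  all_goals rfl

lemma roundedZ_task_le_one (hf : P.DTRPFeasible x y b c p) (i : P.I) :
    ∑ j, ∑ m ∈ range (P.piJ φ j + 1), ∑ k, ∑ n ∈ range (P.lamK φ k + 1),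
      P.roundedZ φ x y b c i j m k n ≤ 1 := by
  have ⟨_, hy01, _, hxsum, hysum, _⟩ := hf
  have hy0 : ∀ k, (0 : ℝ) ≤ y i k := fun k => by rcases hy01 i k with h | h <;> simp [h]
  calc ∑ j, ∑ m ∈ range (P.piJ φ j + 1), ∑ k, ∑ n ∈ range (P.lamK φ k + 1),
        P.roundedZ φ x y b c i j m k n
      = ∑ j, ∑ k, P.roundedWeight φ x y b c i j k := by
        refine sum_congr rfl fun j _ => ?_
        rw [sum_comm]
        exact sum_congr rfl fun k _ => by simpa using sum_roundedZ_mul i j k fun _ _ => 1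
    _ ≤ ∑ j, ∑ k, (x i j : ℝ) * y i k :=
        sum_le_sum fun j _ => sum_le_sum fun k _ => roundedWeight_le_mul hf i j k
    _ = (∑ j, (x i j : ℝ)) * ∑ k, (y i k : ℝ) := (sum_mul_sum _ _ _ _).symm
    _ ≤ 1 := mul_le_one₀ (by exact_mod_cast hxsum i) (sum_nonneg fun k _ => hy0 k)
        (by exact_mod_cast hysum i)

lemma roundedZ_band_le (hφ : 1 < φ) (hf : P.DTRPFeasible x y b c p) (j : P.J) :
    ∑ i, ∑ m ∈ range (P.piJ φ j + 1), ∑ k, ∑ n ∈ range (P.lamK φ k + 1),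
      P.roundedZ φ x y b c i j m k n * P.Blev φ j m ≤ φ * P.bcap j := by
  have ⟨_, _, _, _, hysum, hb0, _, _, hbcap, _⟩ := hf
  have hφb : ∀ i, 0 ≤ φ * b i j := fun i => mul_nonneg (by linarith) (by exact_mod_cast hb0 i j)
  calc ∑ i, ∑ m ∈ range (P.piJ φ j + 1), ∑ k, ∑ n ∈ range (P.lamK φ k + 1),
        P.roundedZ φ x y b c i j m k n * P.Blev φ j m
      = ∑ i, ∑ k, P.roundedWeight φ x y b c i j k * P.Blev φ j (P.bandLevelIdx φ b i j) := by
        refine sum_congr rfl fun i _ => ?_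
        rw [sum_comm]
        exact sum_congr rfl fun k _ => sum_roundedZ_mul i j k fun m _ => (P.Blev φ j m : ℝ)
    _ ≤ ∑ i, (∑ k, (y i k : ℝ)) * (φ * b i j) := by
        simp only [sum_mul]
        exact sum_le_sum fun i _ => sum_le_sum fun k _ => roundedWeight_mul_Blev_le hφ hf i j k
    _ ≤ ∑ i, φ * b i j :=
        sum_le_sum fun i _ => mul_le_of_le_one_left (hφb i) (by exact_mod_cast hysum i)
    _ ≤ φ * P.bcap j := by
        rw [← mul_sum]
        exact mul_le_mul_of_nonneg_left (by exact_mod_cast hbcap j) (by linarith)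

lemma roundedZ_comp_le (hφ : 1 < φ) (hf : P.DTRPFeasible x y b c p) (k : P.K) :
    ∑ i, ∑ j, ∑ m ∈ range (P.piJ φ j + 1), ∑ n ∈ range (P.lamK φ k + 1),
      P.roundedZ φ x y b c i j m k n * P.Clev φ k n ≤ φ * P.ccap k := by
  have ⟨_, _, _, hxsum, _, _, hc0, _, _, hccap, _⟩ := hf
  have hφc : ∀ i, 0 ≤ φ * c i k := fun i => mul_nonneg (by linarith) (by exact_mod_cast hc0 i k)
  calc ∑ i, ∑ j, ∑ m ∈ range (P.piJ φ j + 1), ∑ n ∈ range (P.lamK φ k + 1),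
        P.roundedZ φ x y b c i j m k n * P.Clev φ k n
      = ∑ i, ∑ j, P.roundedWeight φ x y b c i j k * P.Clev φ k (P.compLevelIdx φ c i k) :=
        sum_congr rfl fun i _ => sum_congr rfl fun j _ =>
          sum_roundedZ_mul i j k fun _ n => (P.Clev φ k n : ℝ)
    _ ≤ ∑ i, (∑ j, (x i j : ℝ)) * (φ * c i k) := by
        simp only [sum_mul]
        exact sum_le_sum fun i _ => sum_le_sum fun j _ => roundedWeight_mul_Clev_le hφ hf i j k
    _ ≤ ∑ i, φ * c i k :=
        sum_le_sum fun i _ => mul_le_of_le_one_left (hφc i) (by exact_mod_cast hxsum i)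
    _ ≤ φ * P.ccap k := by
        rw [← mul_sum]
        exact mul_le_mul_of_nonneg_left (by exact_mod_cast hccap k) (by linarith)

lemma roundedZ_feasible (hφ : 1 < φ) (hf : P.DTRPFeasible x y b c p) :
    P.RDPphiFeasible φ (P.roundedZ φ x y b c) := by
  refine ⟨fun i j m k n => ?_, fun i j m k n => roundedZ_eq_zero_of_not_feasComb hφ hf,
    roundedZ_task_le_one hf, roundedZ_band_le hφ hf, roundedZ_comp_le hφ hf⟩
  unfold roundedZ
  split_ifs
  exacts [roundedWeight_nonneg i j k, le_rfl]

lemma DTRPObj_le_RDPObj_roundedZ (hφ : 1 < φ) (hf : P.DTRPFeasible x y b c p) :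
    P.DTRPObj x y b p ≤ P.RDPObj φ (P.roundedZ φ x y b c) := by
  refine sum_le_sum fun i _ => sum_le_sum fun j _ => ?_
  rw [sum_comm]
  refine sum_le_sum fun k _ => ?_
  rw [sum_roundedZ_mul i j k fun m n => P.Ecomb φ i j m k n]
  exact mul_Esaved_le_roundedWeight_mul hφ hf i j k

end Rounding

lemma RDPObj_le_sum_El (hφ : 1 ≤ φ) {z : P.I → P.J → ℕ → P.K → ℕ → ℝ}
    (hz : P.RDPphiFeasible φ z) : P.RDPObj φ z ≤ ∑ i, P.El i := by
  obtain ⟨hz0, hzf, hz1, -, -⟩ := hz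
  have hterm : ∀ i j m k n, z i j m k n * P.Ecomb φ i j m k n ≤ z i j m k n * P.El i := by
    intro i j m k n
    by_cases h : P.FeasComb φ i j m k n
    · exact mul_le_mul_of_nonneg_left (Ecomb_le_El hφ h.2.2.2.1) (hz0 i j m k n)
    · simp [hzf i j m k n h]
  refine sum_le_sum fun i _ => ?_
  calc ∑ j, ∑ m ∈ range (P.piJ φ j + 1), ∑ k, ∑ n ∈ range (P.lamK φ k + 1),
        z i j m k n * P.Ecomb φ i j m k n
      ≤ ∑ j, ∑ m ∈ range (P.piJ φ j + 1), ∑ k, ∑ n ∈ range (P.lamK φ k + 1),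
        z i j m k n * P.El i :=
        sum_le_sum fun j _ => sum_le_sum fun m _ => sum_le_sum fun k _ =>
          sum_le_sum fun n _ => hterm i j m k n
    _ = (∑ j, ∑ m ∈ range (P.piJ φ j + 1), ∑ k, ∑ n ∈ range (P.lamK φ k + 1),
        z i j m k n) * P.El i := by simp only [sum_mul]
    _ ≤ P.El i := mul_le_of_le_one_left (P.hEl i).le (hz1 i)

lemma RDPphiFeasible_zero (hφ : 0 ≤ φ) : P.RDPphiFeasible φ 0 := by
  refine ⟨fun _ _ _ _ _ => le_rfl, fun _ _ _ _ _ _ => rfl, fun _ => by simp, fun j => ?_,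
    fun k => ?_⟩
  · simpa using mul_nonneg hφ (by exact_mod_cast (zero_le_one.trans (P.hbcap j)))
  · simpa using mul_nonneg hφ (by exact_mod_cast (zero_le_one.trans (P.hccap k)))

lemma le_optRDPphi (hφ : 1 ≤ φ) {z : P.I → P.J → ℕ → P.K → ℕ → ℝ}
    (hz : P.RDPphiFeasible φ z) : P.RDPObj φ z ≤ P.optRDPphi φ :=
  le_csSup ⟨∑ i, P.El i, by rintro _ ⟨z, hz, rfl⟩; exact RDPObj_le_sum_El hφ hz⟩ ⟨z, hz, rfl⟩

lemma optRDPphi_nonneg (hφ : 1 ≤ φ) : 0 ≤ P.optRDPphi φ := by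
  simpa [RDPObj] using le_optRDPphi hφ (RDPphiFeasible_zero (P := P) (zero_le_one.trans hφ))

end MECInstance

/-- For every MEC instance and every discretization constant `φ > 1`, the optimal value of
`RDP^φ` is a valid upper bound on the optimal saved energy of DTRP:
`OPT_DTRP ≤ OPT_{RDP^φ}`. -/
theorem rdp_phi_upper_bounds_dtrp (P : MECInstance) (φ : ℝ) (hφ : 1 < φ) :
    P.optDTRP ≤ P.optRDPphi φ := by
  refine Real.sSup_le ?_ (MECInstance.optRDPphi_nonneg hφ.le)
  rintro _ ⟨x, y, b, c, p, hf, rfl⟩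
  exact (MECInstance.DTRPObj_le_RDPObj_roundedZ hφ hf).trans
    (MECInstance.le_optRDPphi hφ.le (MECInstance.roundedZ_feasible hφ hf))
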